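/- arXiv:1505.04545 — 3 statements merged into one kernel-verified Lean document; each statement's English description precedes it below -/
import Mathlib

section
/- Suppose (Δ, ε) is a Frobenius structure on R. Then there exists a unique unit ω of R such that Δ(u) = u ⊗ (ω·α) - (u·σ(α)) ⊗ ω for all u ∈ R, ε(ω) = 0, and ε(ω·α) = 1. -/
open Polynomial TensorProduct

noncomputable section

variable {K : Type*} [CommRing K]

/-- The quadratic `K`-algebra `K[X]/(X² - s·X + p)`. -/
abbrev Quad (s p : K) : Type _ := AdjoinRoot (X ^ 2 - C s * X + C p)

/-- The image of `X`, i.e. the generator `α`. -/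
def qα (s p : K) : Quad s p := AdjoinRoot.root _

lemma quad_aeval_root (s p : K) :
    (aeval (qα s p)) (X ^ 2 - C s * X + C p) = 0 := by
  simp [qα, AdjoinRoot.aeval_eq, AdjoinRoot.mk_self]

/-- The involution `σ` of the quadratic algebra, with `σ α = s - α`. -/
def qσ (s p : K) : Quad s p →ₐ[K] Quad s p :=
  AdjoinRoot.liftAlgHom _ (Algebra.ofId K (Quad s p)) (algebraMap K (Quad s p) s - qα s p) (by
    show aeval (algebraMap K (Quad s p) s - qα s p) (X ^ 2 - C s * X + C p) = 0
    have h := quad_aeval_root s p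
    simp only [map_add, map_sub, map_mul, map_pow, aeval_X, aeval_C] at h ⊢
    linear_combination h)


/-!
Since `Δ u = (u ⊗ 1) · Δ 1`, everything is decided by `Δ 1 = 1 ⊗ x + α ⊗ ω`. Comparing
α-coefficients in `(α ⊗ 1) · Δ 1 = Δ 1 · (1 ⊗ α)` gives `x = ω α - s ω`, which is the claimed
formula for `Δ`, and the counit law at `u = 1` gives `ε ω = 0`, `ε (ω α) = 1`. These two values
alone make `ω` a unit, with inverse `ε α - ε 1 · σ α`. Uniqueness: `ω` is the α-coefficient
of `Δ 1`.
-/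

section TensorBasisTwo

variable {R M N : Type*} [CommSemiring R] [AddCommMonoid M] [Module R M] [AddCommMonoid N]
  [Module R N] (b : Module.Basis (Fin 2) R M)

theorem Module.Basis.exists_eq_tmul_add_tmul (t : M ⊗[R] N) :
    ∃ x y : N, t = b 0 ⊗ₜ x + b 1 ⊗ₜ y := by
  obtain ⟨c, rfl⟩ := TensorProduct.eq_repr_basis_left b t
  exact ⟨c 0, c 1, by simp [Finsupp.sum_fintype]⟩

theorem Module.Basis.tmul_add_tmul_inj {x y x' y' : N} :
    b 0 ⊗ₜ[R] x + b 1 ⊗ₜ y = b 0 ⊗ₜ x' + b 1 ⊗ₜ y' ↔ x = x' ∧ y = y' := by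
  refine ⟨fun h => ?_, by rintro ⟨rfl, rfl⟩; rfl⟩
  have hc := fun i => congrArg (fun t => TensorProduct.equivFinsuppOfBasisLeft b t i) h
  simpa [TensorProduct.equivFinsuppOfBasisLeft_apply_tmul_apply, Finsupp.single_apply]
    using And.intro (hc 0) (hc 1)

end TensorBasisTwo

section QuadraticAlgebra

variable (s p : K)

theorem quad_monic : (X ^ 2 - C s * X + C p).Monic := by
  monicity!

theorem quad_natDegree [Nontrivial K] : (X ^ 2 - C s * X + C p).natDegree = 2 := by
  compute_degree!

theorem powerBasis'_reindex_eq [Nontrivial K] :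
    ⇑((AdjoinRoot.powerBasis' (quad_monic s p)).basis.reindex (finCongr (quad_natDegree s p))) =
      ![1, qα s p] := by
  ext i
  fin_cases i <;> simp only [Module.Basis.reindex_apply, PowerBasis.basis_eq_pow,
    AdjoinRoot.powerBasis'_gen, Fin.zero_eta, Fin.mk_one, Matrix.cons_val_zero,
    Matrix.cons_val_one, qα]
  exacts [pow_zero _, pow_one _]

theorem linearIndependent_one_qα : LinearIndependent K ![1, qα s p] := by
  rcases subsingleton_or_nontrivial K with _ | _
  · exact linearIndependent_of_subsingleton
  · exact powerBasis'_reindex_eq s p ▸ Module.Basis.linearIndependent _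

theorem span_one_qα : ⊤ ≤ Submodule.span K (Set.range ![1, qα s p]) := by
  rcases subsingleton_or_nontrivial K with _ | _
  · have := Module.subsingleton K (Quad s p)
    intro x _
    exact Subsingleton.elim 0 x ▸ zero_mem _
  · exact powerBasis'_reindex_eq s p ▸ (Module.Basis.span_eq _).ge

def quadBasis : Module.Basis (Fin 2) K (Quad s p) :=
  .mk (linearIndependent_one_qα s p) (span_one_qα s p)

@[simp] theorem quadBasis_zero : quadBasis s p 0 = 1 := by simp [quadBasis]
@[simp] theorem quadBasis_one : quadBasis s p 1 = qα s p := by simp [quadBasis]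

theorem qα_mul_qα : qα s p * qα s p = s • qα s p - p • 1 := by
  have h := quad_aeval_root s p
  simp only [map_add, map_sub, map_mul, map_pow, aeval_X, aeval_C] at h
  rw [Algebra.smul_def, Algebra.smul_def, mul_one]
  linear_combination h

theorem qσ_qα : qσ s p (qα s p) = s • 1 - qα s p := by
  rw [Algebra.smul_def, mul_one]
  simp [qσ, qα]

theorem mul_smul_one_sub_smul_qσ_qα (ε : Quad s p →ₗ[K] K) (x : Quad s p) :
    x * (ε (qα s p) • 1 - ε 1 • qσ s p (qα s p)) =
      ε (x * qα s p) • 1 - ε x • qσ s p (qα s p) := by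
  have hx := span_one_qα s p (Submodule.mem_top (x := x))
  induction hx using Submodule.span_induction with
  | mem x hx =>
    obtain ⟨i, rfl⟩ := hx
    fin_cases i
    · simp
    · simp only [Fin.mk_one, Matrix.cons_val_one, Matrix.cons_val_zero, qσ_qα, qα_mul_qα,
        map_sub, map_smul, smul_eq_mul, mul_sub, mul_smul_comm, mul_one]
      module
  | zero => simp
  | add x y _ _ hx hy => simp only [add_mul, hx, hy, map_add, add_smul]; abel
  | smul a x _ hx => simp only [smul_mul_assoc, hx, map_smul, smul_sub, smul_eq_mul, mul_smul]

theorem isUnit_of_map_eq_zero_of_map_mul_qα_eq_one (ε : Quad s p →ₗ[K] K) {ω : Quad s p}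
    (h₀ : ε ω = 0) (h₁ : ε (ω * qα s p) = 1) : IsUnit ω :=
  IsUnit.of_mul_eq_one _ <| by
    rw [mul_smul_one_sub_smul_qσ_qα, h₀, h₁, one_smul, zero_smul, sub_zero]

theorem tmul_mul_qα_sub_mul_qσ_qα_tmul (u a : Quad s p) :
    u ⊗ₜ[K] (a * qα s p) - (u * qσ s p (qα s p)) ⊗ₜ[K] a =
      u ⊗ₜ (a * qα s p - s • a) + (u * qα s p) ⊗ₜ a := by
  rw [qσ_qα, mul_sub, mul_smul_comm, mul_one, sub_tmul, tmul_sub, smul_tmul]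
  abel

theorem eq_mul_qα_sub_smul_of_qα_tmul_one_mul_comm {x ω : Quad s p}
    (h : (qα s p ⊗ₜ[K] 1) * (1 ⊗ₜ x + qα s p ⊗ₜ ω) = (1 ⊗ₜ x + qα s p ⊗ₜ ω) * (1 ⊗ₜ qα s p)) :
    x = ω * qα s p - s • ω := by
  have hcoord : 1 ⊗ₜ[K] (-(p • ω)) + qα s p ⊗ₜ (x + s • ω) =
      1 ⊗ₜ (x * qα s p) + qα s p ⊗ₜ (ω * qα s p) := by
    simp only [mul_add, add_mul, Algebra.TensorProduct.tmul_mul_tmul, mul_one, one_mul,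
      qα_mul_qα] at h
    rw [← h, sub_tmul, smul_tmul, smul_tmul, tmul_neg, tmul_add]
    abel
  have hcoeff := ((quadBasis s p).tmul_add_tmul_inj.mp (by simpa using hcoord)).2
  rw [← hcoeff, add_sub_cancel_right]

theorem eq_of_tmul_mul_qα_sub_mul_qσ_qα_tmul_eq {a b : Quad s p}
    (h : 1 ⊗ₜ[K] (a * qα s p) - qσ s p (qα s p) ⊗ₜ a =
      1 ⊗ₜ (b * qα s p) - qσ s p (qα s p) ⊗ₜ b) :
    a = b := by
  rw [← one_mul (qσ s p _), tmul_mul_qα_sub_mul_qσ_qα_tmul, tmul_mul_qα_sub_mul_qσ_qα_tmul,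
    one_mul] at h
  exact ((quadBasis s p).tmul_add_tmul_inj.mp (by simpa using h)).2

end QuadraticAlgebra

/-- If `(Δ, ε)` is a Frobenius structure on `R = K[X]/(X² - s·X + p)`, then there is a
unique unit `ω` of `R` such that `Δ u = u ⊗ (ω·α) - (u·σ(α)) ⊗ ω` for all `u`,
`ε ω = 0` and `ε (ω·α) = 1`. -/
theorem stmt1 (s p : K)
    (Δ : Quad s p →ₗ[K] Quad s p ⊗[K] Quad s p) (ε : Quad s p →ₗ[K] K)
    (hΔ₁ : ∀ u v : Quad s p, Δ (u * v) = (u ⊗ₜ[K] (1 : Quad s p)) * Δ v)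
    (hΔ₂ : ∀ u v : Quad s p, Δ (u * v) = Δ u * ((1 : Quad s p) ⊗ₜ[K] v))
    (hε : ∀ u : Quad s p,
      (TensorProduct.rid K (Quad s p)) ((LinearMap.lTensor (Quad s p) ε) (Δ u)) = u) :
    ∃! ω : (Quad s p)ˣ,
      (∀ u : Quad s p,
        Δ u = u ⊗ₜ[K] ((ω : Quad s p) * qα s p)
            - (u * qσ s p (qα s p)) ⊗ₜ[K] (ω : Quad s p)) ∧
      ε (ω : Quad s p) = 0 ∧ ε ((ω : Quad s p) * qα s p) = 1 := by
  have hΔ (u : Quad s p) : Δ u = (u ⊗ₜ[K] 1) * Δ 1 := by rw [← hΔ₁, mul_one]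
  obtain ⟨x, ω, hΔ1⟩ := (quadBasis s p).exists_eq_tmul_add_tmul (Δ 1)
  rw [quadBasis_zero, quadBasis_one] at hΔ1
  have hx : x = ω * qα s p - s • ω := by
    refine eq_mul_qα_sub_smul_of_qα_tmul_one_mul_comm s p ?_
    rw [← hΔ1, ← hΔ, ← hΔ₂, one_mul]
  have hform (u : Quad s p) : Δ u = u ⊗ₜ (ω * qα s p) - (u * qσ s p (qα s p)) ⊗ₜ ω := by
    rw [tmul_mul_qα_sub_mul_qσ_qα_tmul, ← hx, hΔ, hΔ1, mul_add,
      Algebra.TensorProduct.tmul_mul_tmul, Algebra.TensorProduct.tmul_mul_tmul, mul_one,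
      one_mul, one_mul]
  have hεω : ε ω = 0 ∧ ε (ω * qα s p) = 1 := by
    have h := hε 1
    rw [hΔ1] at h
    simp only [map_add, LinearMap.lTensor_tmul, TensorProduct.rid_tmul] at h
    obtain ⟨hεx, hεω⟩ := (linearIndependent_one_qα s p).eq_of_pair (s' := 1) (t' := 0)
      (by rw [h, one_smul, zero_smul, add_zero])
    rw [hx, map_sub, map_smul, hεω, smul_zero, sub_zero] at hεx
    exact ⟨hεω, hεx⟩
  refine ⟨(isUnit_of_map_eq_zero_of_map_mul_qα_eq_one s p ε hεω.1 hεω.2).unit,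
    ⟨hform, hεω⟩, fun ω' hω' => Units.ext ?_⟩
  refine eq_of_tmul_mul_qα_sub_mul_qσ_qα_tmul_eq s p ?_
  simpa only [one_mul, IsUnit.unit_spec] using (hω'.1 1).symm.trans (hform 1)

end
end

section
/- The element 1 - t·δ equals ω·ω̄⁻¹ and is a unit of R₀, and the subring of R₀ generated by the elements α, t, δ, ω, ω⁻¹, and (1 - t·δ)⁻¹ is all of R₀. -/
open MvPolynomial

noncomputable section

/-- The polynomial ring `ℤ[α, ᾱ, a, b]`: variables `0,1,2,3` are `α, ᾱ, a, b`. -/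
abbrev P : Type _ := MvPolynomial (Fin 4) ℤ

/-- The element `(a + b·α)·(a + b·ᾱ)`. -/
def dElt : P := (X 2 + X 3 * X 0) * (X 2 + X 3 * X 1)

/-- The universal ring `R₀`, the localization of `P` away from `(a + b·α)(a + b·ᾱ)`. -/
abbrev R0 : Type _ := Localization.Away dElt

/-- `α` in `R₀`. -/
def αR : R0 := algebraMap P R0 (X 0)
/-- `ᾱ` in `R₀`. -/
def ᾱR : R0 := algebraMap P R0 (X 1)
/-- `a` in `R₀`. -/
def aR : R0 := algebraMap P R0 (X 2)
/-- `b` in `R₀`. -/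
def bR : R0 := algebraMap P R0 (X 3)
/-- `ω = a + b·α`. -/
def ωR : R0 := aR + bR * αR
/-- `ω̄ = a + b·ᾱ`. -/
def ωbarR : R0 := aR + bR * ᾱR
/-- `t = -b·(ω·ω̄)⁻¹`. -/
def tR : R0 := -bR * Ring.inverse (ωR * ωbarR)
/-- `δ = ω·(α - ᾱ)`. -/
def δR : R0 := ωR * (αR - ᾱR)

/-!
Since `t = -b/(ωω̄)` and `δ = ω(α - ᾱ)`, we get `1 - tδ = (ω̄ + b(α - ᾱ))/ω̄ = ω/ω̄`. So the
subring generated by the given elements contains `ω̄ = (1 - tδ)⁻¹ω`, `ω̄⁻¹ = ω⁻¹(1 - tδ)`,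
`b = -tωω̄`, `a = ω - bα` and `ᾱ = α - ω⁻¹δ`, hence the image of `ℤ[α, ᾱ, a, b]`, as well as
`(ωω̄)⁻¹ = ω̄⁻¹ω⁻¹`; these generate the localization.
-/

theorem IsLocalization.Away.eq_top_of_range_le {R A : Type*} [CommRing R] [CommRing A]
    [Algebra R A] (r : R) [IsLocalization.Away r A] {S : Subring A}
    (hrange : (algebraMap R A).range ≤ S) (hinv : Ring.inverse (algebraMap R A r) ∈ S) :
    S = ⊤ := by
  refine eq_top_iff.mpr fun x _ ↦ ?_
  obtain ⟨n, p, hx⟩ := IsLocalization.Away.surj r x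
  have hunit := (IsLocalization.Away.algebraMap_isUnit (S := A) r).pow n
  have : x = algebraMap R A p * Ring.inverse (algebraMap R A r) ^ n := by
    rw [Ring.inverse_pow, ← hx, Ring.mul_inverse_cancel_right _ _ hunit]
  rw [this]
  exact S.mul_mem (hrange ⟨p, rfl⟩) (S.pow_mem hinv n)

theorem MvPolynomial.range_le_of_forall_X_mem {σ R : Type*} [CommRing R]
    (f : MvPolynomial σ ℤ →+* R) {S : Subring R} (hX : ∀ i, f (X i) ∈ S) : f.range ≤ S := by
  rintro _ ⟨p, rfl⟩
  induction p using MvPolynomial.induction_on with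
  | C n => rw [← RingHom.comp_apply, eq_intCast]; exact intCast_mem S n
  | add p q hp hq => simpa only [map_add] using S.add_mem hp hq
  | mul_X p i hp => simpa only [map_mul] using S.mul_mem hp (hX i)

lemma algebraMap_dElt : algebraMap P R0 dElt = ωR * ωbarR := by
  simp only [dElt, ωR, ωbarR, aR, bR, αR, ᾱR, map_mul, map_add]

lemma isUnit_ωR_mul_ωbarR : IsUnit (ωR * ωbarR) :=
  algebraMap_dElt ▸ IsLocalization.Away.algebraMap_isUnit dElt

lemma isUnit_ωR : IsUnit ωR := isUnit_of_mul_isUnit_left isUnit_ωR_mul_ωbarR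

lemma isUnit_ωbarR : IsUnit ωbarR := isUnit_of_mul_isUnit_right isUnit_ωR_mul_ωbarR

lemma tR_eq : tR = -bR * Ring.inverse ωR * Ring.inverse ωbarR := by
  rw [tR, Ring.mul_inverse_rev]; ring

lemma one_sub_tR_mul_δR : 1 - tR * δR = ωR * Ring.inverse ωbarR := by
  have hω := Ring.mul_inverse_cancel _ isUnit_ωR
  have hωbar := Ring.mul_inverse_cancel _ isUnit_ωbarR
  rw [tR_eq, δR]
  simp only [ωR, ωbarR] at hω hωbar ⊢
  linear_combination (bR * (αR - ᾱR) * Ring.inverse (aR + bR * ᾱR)) * hω - hωbar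

lemma isUnit_one_sub_tR_mul_δR : IsUnit (1 - tR * δR) :=
  one_sub_tR_mul_δR ▸ isUnit_ωR.mul isUnit_ωbarR.ringInverse

lemma ωbarR_eq : ωbarR = Ring.inverse (1 - tR * δR) * ωR := by
  rw [one_sub_tR_mul_δR, Ring.mul_inverse_rev, Ring.inverse_inverse isUnit_ωbarR,
    Ring.inverse_mul_cancel_right _ _ isUnit_ωR]

lemma inverse_ωbarR_eq : Ring.inverse ωbarR = Ring.inverse ωR * (1 - tR * δR) := by
  rw [one_sub_tR_mul_δR, Ring.inverse_mul_cancel_left _ _ isUnit_ωR]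

lemma bR_eq : bR = -(tR * ωR * ωbarR) := by
  rw [tR, mul_assoc, Ring.inverse_mul_cancel_right _ _ isUnit_ωR_mul_ωbarR, neg_neg]

lemma ᾱR_eq : ᾱR = αR - Ring.inverse ωR * δR := by
  rw [δR, Ring.inverse_mul_cancel_left _ _ isUnit_ωR]; ring

/-- `1 - t·δ = ω·ω̄⁻¹` is a unit of `R₀`, and `R₀` is generated as a ring by
`α`, `t`, `δ`, `ω`, `ω⁻¹` and `(1 - t·δ)⁻¹`. -/
theorem stmt11 :
    1 - tR * δR = ωR * Ring.inverse ωbarR ∧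
    IsUnit (1 - tR * δR) ∧
    Subring.closure {αR, tR, δR, ωR, Ring.inverse ωR, Ring.inverse (1 - tR * δR)}
      = (⊤ : Subring R0) := by
  refine ⟨one_sub_tR_mul_δR, isUnit_one_sub_tR_mul_δR, ?_⟩
  set S := Subring.closure {αR, tR, δR, ωR, Ring.inverse ωR, Ring.inverse (1 - tR * δR)}
  have hα : αR ∈ S := Subring.subset_closure (by simp)
  have ht : tR ∈ S := Subring.subset_closure (by simp)
  have hδ : δR ∈ S := Subring.subset_closure (by simp)
  have hω : ωR ∈ S := Subring.subset_closure (by simp)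
  have hωinv : Ring.inverse ωR ∈ S := Subring.subset_closure (by simp)
  have hu : Ring.inverse (1 - tR * δR) ∈ S := Subring.subset_closure (by simp)
  have hωbar : ωbarR ∈ S := ωbarR_eq ▸ S.mul_mem hu hω
  have hωbarinv : Ring.inverse ωbarR ∈ S :=
    inverse_ωbarR_eq ▸ S.mul_mem hωinv (S.sub_mem S.one_mem (S.mul_mem ht hδ))
  have hb : bR ∈ S := bR_eq ▸ S.neg_mem (S.mul_mem (S.mul_mem ht hω) hωbar)
  have ha : aR ∈ S :=
    (show aR = ωR - bR * αR by rw [ωR]; ring) ▸ S.sub_mem hω (S.mul_mem hb hα)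
  have hᾱ : ᾱR ∈ S := ᾱR_eq ▸ S.sub_mem hα (S.mul_mem hωinv hδ)
  refine IsLocalization.Away.eq_top_of_range_le dElt
    (MvPolynomial.range_le_of_forall_X_mem _ fun i ↦ ?_) ?_
  · fin_cases i
    exacts [hα, hᾱ, ha, hb]
  · rw [algebraMap_dElt, Ring.mul_inverse_rev]
    exact S.mul_mem hωbarinv hωinv

end
end

section
/- Set s := -δ²·(1 - t·δ)⁻¹ ∈ A. Then the unique ring homomorphism from ℤ[S, T][X]/(X² - T·S·X + S) to A sending S to s, T to t, and X to δ is bijective; in other words, A is a free module of rank 2 over its subring generated by s and t, with basis (1, δ), and δ satisfies δ² - t·s·δ + s = 0. -/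
/-!
The relation `X² - T·S·X + S = 0` can be rewritten as `S·(1 - T·X) = -X²`, and it makes
`1 - T·X` a unit. Hence `t ↦ T`, `δ ↦ X` extends from `ℤ[t, δ]` to the localization `A` and sends
`s = -δ²·(1 - t·δ)⁻¹` to `S`; this map and `S ↦ s`, `T ↦ t`, `X ↦ δ` are mutually inverse,
as both composites fix the generators.
-/

noncomputable section

/-- The polynomial ring `ℤ[t, δ]`: variable `0` is `t`, variable `1` is `δ`. -/
abbrev Ztδ : Type _ := MvPolynomial (Fin 2) ℤ

/-- The ring `A`, the localization of `ℤ[t, δ]` away from `1 - t·δ`. -/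
abbrev ARing : Type _ :=
  Localization.Away ((1 : Ztδ) - MvPolynomial.X 0 * MvPolynomial.X 1)

/-- `t` in `A`. -/
def tA : ARing := algebraMap Ztδ ARing (MvPolynomial.X 0)
/-- `δ` in `A`. -/
def δA : ARing := algebraMap Ztδ ARing (MvPolynomial.X 1)
/-- `s = -δ²·(1 - t·δ)⁻¹` in `A`. -/
def sA : ARing := -δA ^ 2 * Ring.inverse (1 - tA * δA)

/-- The polynomial ring `ℤ[S, T]`: variable `0` is `S`, variable `1` is `T`. -/
abbrev ZST : Type _ := MvPolynomial (Fin 2) ℤ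

/-- The quotient `ℤ[S, T][X]/(X² - T·S·X + S)`. -/
abbrev QST : Type _ :=
  AdjoinRoot ((Polynomial.X ^ 2
    - Polynomial.C (MvPolynomial.X 1 * MvPolynomial.X 0) * Polynomial.X
    + Polynomial.C (MvPolynomial.X 0) : Polynomial ZST))

open MvPolynomial

section Quadratic

variable {R : Type*} [CommRing R] {s t x : R}

theorem sq_sub_mul_add_eq_zero_iff :
    x ^ 2 - t * s * x + s = 0 ↔ s * (1 - t * x) = -x ^ 2 := by
  constructor <;> intro h <;> linear_combination h

theorem isUnit_one_sub_mul_of_sq_sub_mul_add_eq_zero (h : x ^ 2 - t * s * x + s = 0) :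
    IsUnit (1 - t * x) :=
  .of_mul_eq_one (1 - t ^ 2 * s + t * x) (by linear_combination (-t ^ 2) * h)

end Quadratic

theorem AdjoinRoot.ringHom_ext_of_mvPolynomial_int {σ B : Type*} [CommRing B]
    {p : Polynomial (MvPolynomial σ ℤ)} {f g : AdjoinRoot p →+* B}
    (hX : ∀ i, f (of p (X i)) = g (of p (X i))) (hroot : f (root p) = g (root p)) : f = g :=
  ringHom_ext (MvPolynomial.ringHom_ext (fun n => (hom_C _ n).trans (hom_C _ n).symm) hX) hroot

theorem Localization.Away.ringHom_ext_of_mvPolynomial_int {σ B : Type*} [CommRing B]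
    {a : MvPolynomial σ ℤ} {f g : Localization.Away a →+* B}
    (hX : ∀ i, f (algebraMap (MvPolynomial σ ℤ) _ (X i)) =
      g (algebraMap (MvPolynomial σ ℤ) _ (X i))) : f = g :=
  IsLocalization.ringHom_ext (Submonoid.powers a)
    (MvPolynomial.ringHom_ext (fun n => (hom_C _ n).trans (hom_C _ n).symm) hX)

namespace ARing

theorem isUnit_one_sub_tA_mul_δA : IsUnit (1 - tA * δA) := by
  have h := IsLocalization.Away.algebraMap_isUnit (S := ARing) ((1 : Ztδ) - X 0 * X 1)
  rwa [map_sub, map_one, map_mul] at h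

theorem sA_mul_one_sub_tA_mul_δA : sA * (1 - tA * δA) = -δA ^ 2 := by
  rw [sA, mul_assoc, Ring.inverse_mul_cancel _ isUnit_one_sub_tA_mul_δA, mul_one]

theorem δA_sq_sub_mul_add_eq_zero : δA ^ 2 - tA * sA * δA + sA = 0 :=
  sq_sub_mul_add_eq_zero_iff.2 sA_mul_one_sub_tA_mul_δA

end ARing

namespace QST

def S : QST := algebraMap ZST QST (X 0)
def T : QST := algebraMap ZST QST (X 1)
def root : QST := AdjoinRoot.root _

theorem root_sq_sub_mul_add_eq_zero : root ^ 2 - T * S * root + S = 0 := by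
  have h : AdjoinRoot.mk _ _ = (0 : QST) := AdjoinRoot.mk_self
  simpa [S, T, root, AdjoinRoot.algebraMap_eq, AdjoinRoot.mk_X, AdjoinRoot.mk_C] using h

end QST

def QST.toARing : QST →+* ARing :=
  AdjoinRoot.lift (eval₂Hom (Int.castRingHom ARing) ![sA, tA]) δA (by
    simpa using ARing.δA_sq_sub_mul_add_eq_zero)

namespace QST

theorem toARing_S : toARing S = sA := by
  simp [toARing, S, AdjoinRoot.algebraMap_eq]

theorem toARing_T : toARing T = tA := by
  simp [toARing, T, AdjoinRoot.algebraMap_eq]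

theorem toARing_root : toARing root = δA := AdjoinRoot.lift_root _

end QST

def ARing.toQST : ARing →+* QST :=
  IsLocalization.Away.lift (S := ARing) ((1 : Ztδ) - X 0 * X 1)
    (g := eval₂Hom (Int.castRingHom QST) ![QST.T, QST.root]) (by
    simpa using isUnit_one_sub_mul_of_sq_sub_mul_add_eq_zero QST.root_sq_sub_mul_add_eq_zero)

namespace ARing

theorem toQST_tA : toQST tA = QST.T := by
  simp [toQST, tA, IsLocalization.Away.lift_eq]

theorem toQST_δA : toQST δA = QST.root := by
  simp [toQST, δA, IsLocalization.Away.lift_eq]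

theorem toQST_sA : toQST sA = QST.S := by
  have hroot := QST.root_sq_sub_mul_add_eq_zero
  refine (isUnit_one_sub_mul_of_sq_sub_mul_add_eq_zero hroot).mul_right_cancel ?_
  have h : toQST (sA * (1 - tA * δA)) = toQST (-δA ^ 2) := by rw [sA_mul_one_sub_tA_mul_δA]
  simp only [map_mul, map_sub, map_one, map_neg, map_pow, toQST_tA, toQST_δA] at h
  rw [h, sq_sub_mul_add_eq_zero_iff.1 hroot]

end ARing

def QST.equivARing : QST ≃+* ARing :=
  RingEquiv.ofRingHom QST.toARing ARing.toQST
    (Localization.Away.ringHom_ext_of_mvPolynomial_int <| Fin.forall_fin_two.2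
      ⟨congrArg QST.toARing ARing.toQST_tA |>.trans QST.toARing_T,
        congrArg QST.toARing ARing.toQST_δA |>.trans QST.toARing_root⟩)
    (AdjoinRoot.ringHom_ext_of_mvPolynomial_int
      (Fin.forall_fin_two.2
        ⟨congrArg ARing.toQST QST.toARing_S |>.trans ARing.toQST_sA,
          congrArg ARing.toQST QST.toARing_T |>.trans ARing.toQST_tA⟩)
      (congrArg ARing.toQST QST.toARing_root |>.trans ARing.toQST_δA))

/-- The unique ring homomorphism `ℤ[S,T][X]/(X² - T·S·X + S) → A` sending `S ↦ s`,
`T ↦ t` and `X ↦ δ` is bijective; moreover `δ² - t·s·δ + s = 0` in `A`. -/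
theorem stmt13 :
    (∃! f : QST →+* ARing,
        f (algebraMap ZST QST (MvPolynomial.X 0)) = sA ∧
        f (algebraMap ZST QST (MvPolynomial.X 1)) = tA ∧
        f (AdjoinRoot.root _) = δA) ∧
    (∀ f : QST →+* ARing,
        f (algebraMap ZST QST (MvPolynomial.X 0)) = sA →
        f (algebraMap ZST QST (MvPolynomial.X 1)) = tA →
        f (AdjoinRoot.root _) = δA → Function.Bijective f) ∧
    δA ^ 2 - tA * sA * δA + sA = 0 := by
  have eq_toARing (f : QST →+* ARing) (hS : f QST.S = sA) (hT : f QST.T = tA)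
      (hroot : f QST.root = δA) : f = QST.toARing :=
    AdjoinRoot.ringHom_ext_of_mvPolynomial_int
      (Fin.forall_fin_two.2 ⟨hS.trans QST.toARing_S.symm, hT.trans QST.toARing_T.symm⟩)
      (hroot.trans QST.toARing_root.symm)
  refine ⟨⟨QST.toARing, ⟨QST.toARing_S, QST.toARing_T, QST.toARing_root⟩,
      fun f ⟨hS, hT, hroot⟩ => eq_toARing f hS hT hroot⟩,
    fun f hS hT hroot => ?_, ARing.δA_sq_sub_mul_add_eq_zero⟩
  rw [eq_toARing f hS hT hroot]
  exact QST.equivARing.bijective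

end
end
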